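/- Let R be a Bézout domain, r a natural number, and a_1, …, a_{r+1} elements of R that generate the unit ideal. Then the quotient of the free module R^{r+1} by the cyclic submodule generated by the vector (a_1, …, a_{r+1}) is a free R-module of rank r. -/

import Mathlib

/-!
A Bézout relation `∑ bᵢ aᵢ = 1` gives a functional `ρ v = ∑ bᵢ vᵢ` with `ρ a = 1`, so `R a` is
complementary to `ker ρ`: the quotient is isomorphic to `ker ρ`, and `R^(r+1) ≃ ker ρ × R`.
It remains to see that a finitely generated module `M` embedded in `R^n` is free, by induction
on `n`: the image of the first coordinate is a principal ideal `(d)`; if `d ≠ 0`, dividing by `d`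
gives a functional on `M` taking the value `1`, which splits off a copy of `R` and leaves a kernel
embedded in `R^(n-1)`.
-/

open Module Submodule LinearMap

section Splitting

variable {R M : Type*} [CommRing R] [AddCommGroup M] [Module R M]
  {φ : M →ₗ[R] R} {m : M}

theorem LinearMap.isCompl_span_singleton_ker (hm : φ m = 1) : IsCompl (R ∙ m) (ker φ) := by
  refine ⟨disjoint_def.2 fun x hx hφx ↦ ?_, codisjoint_iff.2 (eq_top_iff.2 fun x _ ↦ ?_)⟩
  · obtain ⟨c, rfl⟩ := mem_span_singleton.1 hx
    simp_all
  · rw [mem_sup]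
    exact ⟨φ x • m, smul_mem _ _ (mem_span_singleton_self m), x - φ x • m,
      by simp [hm], add_sub_cancel _ _⟩

def LinearMap.kerProdEquivOfApplyEqOne (hm : φ m = 1) : (ker φ × R) ≃ₗ[R] M where
  toFun p := p.1 + p.2 • m
  invFun x := (⟨x - φ x • m, by simp [hm]⟩, φ x)
  map_add' p q := by simp only [Prod.fst_add, Prod.snd_add, coe_add, add_smul]; abel
  map_smul' c p := by simp [smul_add, smul_smul]
  left_inv p := by
    have : φ p.1 = 0 := p.1.2
    ext <;> simp [this, hm]
  right_inv x := by simp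

theorem LinearMap.finite_ker_of_apply_eq_one [Module.Finite R M] (hm : φ m = 1) :
    Module.Finite R (ker φ) :=
  .equiv (quotientEquivOfIsCompl _ _ (isCompl_span_singleton_ker hm))

end Splitting

theorem LinearMap.exists_apply_eq_one_and_ker_eq {R M : Type*} [CommRing R] [IsDomain R]
    [IsBezout R] [AddCommGroup M] [Module R M] [Module.Finite R M] {g : M →ₗ[R] R}
    (hg : g ≠ 0) : ∃ φ : M →ₗ[R] R, ∃ m, φ m = 1 ∧ ker φ = ker g := by
  obtain ⟨d, hd⟩ := (IsBezout.isPrincipal_of_FG _ (Submodule.fg_range g)).principal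
  have hd0 : d ≠ 0 := by
    rintro rfl
    exact hg (range_eq_bot.1 (by simpa using hd))
  have hgd : ∀ x, g x ∈ R ∙ d := fun x ↦ hd ▸ mem_range_self g x
  let e := LinearEquiv.toSpanNonzeroSingleton R R d hd0
  let φ : M →ₗ[R] R := e.symm.toLinearMap ∘ₗ g.codRestrict _ hgd
  have hφ : ∀ x, φ x * d = g x := fun x ↦
    LinearEquiv.toSpanNonzeroSingleton_symm_apply_smul R R d hd0 ⟨g x, hgd x⟩
  obtain ⟨m, hm⟩ : d ∈ range g := hd ▸ Submodule.mem_span_singleton_self d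
  refine ⟨φ, m, ?_, ?_⟩
  · simpa [hm, hd0] using hφ m
  · ext x
    simp [← hφ x, hd0]

theorem LinearMap.injective_funLeft_succ_comp {R M : Type*} [CommRing R] [AddCommGroup M]
    [Module R M] {n : ℕ} {f : M →ₗ[R] Fin (n + 1) → R} (hf : Function.Injective f)
    (h0 : ∀ x, f x 0 = 0) : Function.Injective (funLeft R R Fin.succ ∘ₗ f) := by
  intro x y hxy
  refine hf (funext fun i ↦ Fin.cases ?_ (fun j ↦ congrFun hxy j) i)
  rw [h0, h0]

theorem Module.free_of_injective_pi {R M : Type*} [CommRing R] [IsDomain R] [IsBezout R]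
    [AddCommGroup M] [Module R M] [Module.Finite R M] {n : ℕ} {f : M →ₗ[R] Fin n → R}
    (hf : Function.Injective f) : Module.Free R M := by
  induction n generalizing M with
  | zero =>
    have : Subsingleton M := hf.subsingleton
    exact Module.Free.of_subsingleton R M
  | succ n ih =>
    by_cases hg : proj 0 ∘ₗ f = 0
    · exact ih (injective_funLeft_succ_comp hf fun x ↦ congr($hg x))
    obtain ⟨φ, m, hm, hker⟩ := exists_apply_eq_one_and_ker_eq hg
    have := finite_ker_of_apply_eq_one hm
    have hinj : Function.Injective (f ∘ₗ (ker φ).subtype) := hf.comp (ker φ).injective_subtype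
    have : Module.Free R (ker φ) :=
      ih (injective_funLeft_succ_comp hinj fun x ↦ by simpa [hker] using x.2)
    exact .of_equiv (kerProdEquivOfApplyEqOne hm)

/-- Over a Bézout domain, the quotient of `R^(r+1)` by the cyclic submodule generated by a
unimodular vector `(a 0, …, a r)` is free of rank `r`. -/
theorem quotient_span_unimodular_free (R : Type u) [CommRing R] [IsDomain R] [IsBezout R]
    (r : ℕ) (a : Fin (r + 1) → R) (ha : Ideal.span (Set.range a) = ⊤) :
    Nonempty (((Fin (r + 1) → R) ⧸ Submodule.span R {a}) ≃ₗ[R] (Fin r → R)) := by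
  obtain ⟨b, hb⟩ := Ideal.mem_span_range_iff_exists_fun.1 (ha ▸ Submodule.mem_top (x := 1))
  let ρ : (Fin (r + 1) → R) →ₗ[R] R := Fintype.linearCombination R b
  have hρ : ρ a = 1 := by simpa [ρ, Fintype.linearCombination_apply, mul_comm] using hb
  have hcompl := isCompl_span_singleton_ker hρ
  have := finite_ker_of_apply_eq_one hρ
  have : Module.Free R (ker ρ) := free_of_injective_pi (ker ρ).injective_subtype
  have hrank : finrank R (ker ρ) = r := by
    have := (kerProdEquivOfApplyEqOne hρ).finrank_eq
    simp_all [finrank_prod]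
  exact ⟨(quotientEquivOfIsCompl _ _ hcompl).trans (finBasisOfFinrankEq R _ hrank).equivFun⟩
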